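/- Let p be an odd prime. For every vertex v = [λ,μ] of Π_p with μ ≠ 0 and every i with 1 ≤ i ≤ (p−1)/2, the number of vertices w of Π_p that are adjacent both to v and to the principal-axis vertex [i,0] is exactly 2. In other words, every vertex not on the principal axis has exactly two neighbours on the boundary of each wheel. -/

import Mathlib

/-- Pairs `(λ, μ) ∈ (ℤ/N)²` with `gcd(λ, μ, N) = 1`. -/
abbrev PlatonicPair (N : ℕ) : Type :=
  {x : ZMod N × ZMod N // Nat.gcd (Nat.gcd x.1.val x.2.val) N = 1}

/-- Identify `(λ,μ)` with `(-λ,-μ)`. -/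
instance platonicSetoid (N : ℕ) : Setoid (PlatonicPair N) where
  r x y := y.val = x.val ∨ y.val = -x.val
  iseqv := by
    refine ⟨fun _ => Or.inl rfl, ?_, ?_⟩
    · rintro x y (h | h)
      · exact Or.inl h.symm
      · right; rw [h, neg_neg]
    · rintro x y z (h1 | h1) (h2 | h2)
      · exact Or.inl (h2.trans h1)
      · right; rw [h2, h1]
      · right; rw [h2, h1]
      · left; rw [h2, h1, neg_neg]

/-- Vertices of the Platonic graph: classes `[λ,μ] = {(λ,μ), (-λ,-μ)}`. -/
abbrev PlatonicVertex (N : ℕ) : Type := Quotient (platonicSetoid N)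

/-- The Platonic graph `Π_N`: distinct classes `[λ,μ]`, `[ν,ω]` are adjacent
iff `λω - μν = ±1` in `ℤ/N`. -/
def Platonic (N : ℕ) : SimpleGraph (PlatonicVertex N) where
  Adj a b := a ≠ b ∧ ∃ x y : PlatonicPair N, ⟦x⟧ = a ∧ ⟦y⟧ = b ∧
    (x.val.1 * y.val.2 - x.val.2 * y.val.1 = 1 ∨
     x.val.1 * y.val.2 - x.val.2 * y.val.1 = -1)
  symm := ⟨by
    rintro a b ⟨hne, x, y, hx, hy, hdet⟩
    refine ⟨hne.symm, y, x, hy, hx, ?_⟩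
    rcases hdet with h | h
    · right; linear_combination -h
    · left; linear_combination -h⟩
  loopless := ⟨fun a h => h.1 rfl⟩

instance platonicDecRel (N : ℕ) :
    DecidableRel (α := PlatonicPair N) (· ≈ ·) := fun x y =>
  inferInstanceAs (Decidable (y.val = x.val ∨ y.val = -x.val))

instance (N : ℕ) : DecidableEq (PlatonicVertex N) :=
  @Quotient.decidableEq _ _ (platonicDecRel N)

instance (N : ℕ) [NeZero N] : Fintype (PlatonicVertex N) :=
  Quotient.fintype _

instance platonicAdjDec (N : ℕ) [NeZero N] : DecidableRel (Platonic N).Adj := fun a b =>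
  inferInstanceAs (Decidable (a ≠ b ∧ ∃ x y : PlatonicPair N, ⟦x⟧ = a ∧ ⟦y⟧ = b ∧
    (x.val.1 * y.val.2 - x.val.2 * y.val.1 = 1 ∨
     x.val.1 * y.val.2 - x.val.2 * y.val.1 = -1)))

/-- The class of `(λ,μ)` has nonvanishing second coordinate. -/
def secondNZ (N : ℕ) (v : PlatonicVertex N) : Prop :=
  ∀ x : PlatonicPair N, ⟦x⟧ = v → x.val.2 ≠ 0

instance (N : ℕ) [NeZero N] : DecidablePred (secondNZ N) := fun _ =>
  Fintype.decidableForallFintype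

/-- The modified Platonic graph `Π_p'`: induced subgraph of `Π_p` on the classes
`[λ,μ]` with `μ ≠ 0`. -/
def ModPlatonic (N : ℕ) : SimpleGraph {v : PlatonicVertex N | secondNZ N v} :=
  SimpleGraph.induce {v : PlatonicVertex N | secondNZ N v} (Platonic N)

instance (N : ℕ) [NeZero N] : DecidableRel (ModPlatonic N).Adj := fun a b =>
  inferInstanceAs (Decidable ((Platonic N).Adj a b))

/-!
A neighbour `[A,B]` of the axis vertex `[I,0]` satisfies `B·I = ∓1`, so after choosing the sign
of the representative, `B = I⁻¹`. For `v = [L,M]` with `M ≠ 0`, adjacency to `v` then reads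
`A·M - I⁻¹·L = ±1`, which pins `A` down to `M⁻¹(I⁻¹L ± 1)`. The two resulting vertices are
distinct because `p` is odd.
-/

section PairDet

variable {R : Type*} [CommRing R]

def pairDet (x y : R × R) : R := x.1 * y.2 - x.2 * y.1

@[simp]
lemma pairDet_neg_left (x y : R × R) : pairDet (-x) y = -pairDet x y := by
  simp only [pairDet, Prod.fst_neg, Prod.snd_neg]; ring

@[simp]
lemma pairDet_neg_right (x y : R × R) : pairDet x (-y) = -pairDet x y := by
  simp only [pairDet, Prod.fst_neg, Prod.snd_neg]; ring

@[simp]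
lemma pairDet_self (x : R × R) : pairDet x x = 0 := by
  simp only [pairDet]; ring

lemma neg_eq_one_or_neg_eq_neg_one_iff {d : R} : (-d = 1 ∨ -d = -1) ↔ (d = 1 ∨ d = -1) := by
  rw [neg_eq_iff_eq_neg, neg_inj, or_comm]

end PairDet

section WheelPoint

variable {F : Type*} [Field F]

def wheelPoint (v : F × F) (u s : F) : F × F := (v.2⁻¹ * (u * v.1 + s), u)

lemma wheelPoint_eq_iff {v : F × F} (hv : v.2 ≠ 0) (u s : F) (y : F × F) :
    wheelPoint v u s = y ↔ y.2 = u ∧ pairDet y v = s := by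
  constructor
  · rintro rfl
    refine ⟨rfl, ?_⟩
    simp only [wheelPoint, pairDet]
    field_simp
    ring
  · rintro ⟨h2, hdet⟩
    refine Prod.ext ?_ h2.symm
    simp only [wheelPoint, pairDet, h2] at hdet ⊢
    rw [← hdet]
    field_simp
    ring

lemma wheelPoint_eq_neg_iff {v : F × F} (hv : v.2 ≠ 0) (u s : F) (y : F × F) :
    wheelPoint v u s = -y ↔ y.2 = -u ∧ pairDet y v = -s := by
  rw [wheelPoint_eq_iff hv, Prod.snd_neg, pairDet_neg_left, neg_eq_iff_eq_neg,
    neg_eq_iff_eq_neg]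

lemma pairDet_wheelPoint {v : F × F} (hv : v.2 ≠ 0) (u s : F) :
    pairDet (wheelPoint v u s) v = s :=
  ((wheelPoint_eq_iff hv u s _).1 rfl).2

end WheelPoint

lemma PlatonicPair.val_ne_zero {N : ℕ} [Nontrivial (ZMod N)] (x : PlatonicPair N) :
    x.val ≠ 0 := by
  intro h
  have hgcd := x.property
  rw [h, Prod.fst_zero, Prod.snd_zero, ZMod.val_zero, Nat.gcd_zero_left,
    Nat.gcd_zero_left] at hgcd
  exact ZMod.nontrivial_iff.1 inferInstance hgcd

def PlatonicPair.ofSndNeZero {p : ℕ} [Fact p.Prime] (x : ZMod p × ZMod p) (hx : x.2 ≠ 0) :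
    PlatonicPair p :=
  ⟨x, Nat.Coprime.coprime_dvd_left (Nat.gcd_dvd_right _ _)
    (Nat.coprime_of_lt_prime ((ZMod.val_ne_zero _).2 hx) (ZMod.val_lt _) Fact.out).symm⟩

namespace Platonic

lemma adj_mk_iff {N : ℕ} [Nontrivial (ZMod N)] (x y : PlatonicPair N) :
    (Platonic N).Adj ⟦x⟧ ⟦y⟧ ↔ pairDet x.val y.val = 1 ∨ pairDet x.val y.val = -1 := by
  constructor
  · rintro ⟨-, x', y', hx, hy, hdet⟩
    change pairDet x'.val y'.val = 1 ∨ pairDet x'.val y'.val = -1 at hdet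
    rcases Quotient.eq.1 hx with hx | hx <;> rcases Quotient.eq.1 hy with hy | hy <;>
      simpa only [hx, hy, pairDet_neg_left, pairDet_neg_right, neg_neg,
        neg_eq_one_or_neg_eq_neg_one_iff] using hdet
  · refine fun hdet => ⟨fun hxy => ?_, x, y, rfl, rfl, hdet⟩
    rcases Quotient.eq.1 hxy with h | h <;> simp [h] at hdet

section Prime

variable {p : ℕ} [Fact p.Prime]

lemma adj_axis_iff {I : ZMod p} (hI : I ≠ 0) (x a : PlatonicPair p) (ha : a.val = (I, 0)) :
    (Platonic p).Adj ⟦x⟧ ⟦a⟧ ↔ x.val.2 = I⁻¹ ∨ x.val.2 = -I⁻¹ := by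
  have hdet : pairDet x.val a.val = -(x.val.2 * I) := by
    rw [ha]; simp only [pairDet]; ring
  have hneg : x.val.2 * I = -1 ↔ x.val.2 = -I⁻¹ := by
    rw [← neg_eq_iff_eq_neg, ← neg_mul, mul_eq_one_iff_eq_inv₀ hI, neg_eq_iff_eq_neg]
  rw [adj_mk_iff, hdet, neg_eq_one_or_neg_eq_neg_one_iff, mul_eq_one_iff_eq_inv₀ hI, hneg]

def wheelVertex (x : PlatonicPair p) {u : ZMod p} (hu : u ≠ 0) (s : ZMod p) :
    PlatonicVertex p :=
  ⟦PlatonicPair.ofSndNeZero (wheelPoint x.val u s) hu⟧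

variable {x : PlatonicPair p} {u : ZMod p}

lemma mk_eq_wheelVertex_iff (hx : x.val.2 ≠ 0) (hu : u ≠ 0) (s : ZMod p) (y : PlatonicPair p) :
    ⟦y⟧ = wheelVertex x hu s ↔
      (y.val.2 = u ∧ pairDet y.val x.val = s) ∨ (y.val.2 = -u ∧ pairDet y.val x.val = -s) := by
  rw [wheelVertex, Quotient.eq]
  exact or_congr (wheelPoint_eq_iff hx u s y.val) (wheelPoint_eq_neg_iff hx u s y.val)

lemma wheelVertex_one_ne_neg_one (hx : x.val.2 ≠ 0) (hu : u ≠ 0) (hp : p ≠ 2) :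
    wheelVertex x hu 1 ≠ wheelVertex x hu (-1) := by
  intro h
  have hchar : ringChar (ZMod p) ≠ 2 := by rwa [ZMod.ringChar_zmod_n]
  rcases (mk_eq_wheelVertex_iff hx hu (-1) _).1 h with ⟨-, hdet⟩ | ⟨hneg, -⟩
  · change pairDet (wheelPoint x.val u 1) x.val = -1 at hdet
    rw [pairDet_wheelPoint hx] at hdet
    exact Ring.neg_one_ne_one_of_char_ne_two hchar hdet.symm
  · exact hu ((Ring.eq_self_iff_eq_zero_of_char_ne_two hchar).1 hneg.symm)

lemma adj_and_adj_axis_iff (hx : x.val.2 ≠ 0) {I : ZMod p} (hI : I ≠ 0)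
    (a : PlatonicPair p) (ha : a.val = (I, 0)) (w : PlatonicVertex p) :
    (Platonic p).Adj w ⟦x⟧ ∧ (Platonic p).Adj w ⟦a⟧ ↔
      w = wheelVertex x (inv_ne_zero hI) 1 ∨ w = wheelVertex x (inv_ne_zero hI) (-1) := by
  induction w using Quotient.inductionOn with
  | h y =>
    rw [adj_mk_iff, adj_axis_iff hI y a ha, mk_eq_wheelVertex_iff hx, mk_eq_wheelVertex_iff hx,
      neg_neg]
    tauto

end Prime

end Platonic

theorem platonic_two_neighbours_per_wheel_general (p : ℕ) (hp : p.Prime) (hodd : Odd p)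
    [NeZero p] (v a : PlatonicVertex p) (hv : secondNZ p v)
    (i : ℕ)
    (ha : ∃ x : PlatonicPair p, ⟦x⟧ = a ∧ x.val = ((i : ZMod p), 0)) :
    (Finset.univ.filter
      (fun w : PlatonicVertex p =>
        (Platonic p).Adj w v ∧ (Platonic p).Adj w a)).card = 2 := by
  have := Fact.mk hp
  obtain ⟨x, rfl⟩ := Quotient.exists_rep v
  obtain ⟨a, rfl, ha⟩ := ha
  have hx : x.val.2 ≠ 0 := hv x rfl
  have hI : (i : ZMod p) ≠ 0 := fun h => a.val_ne_zero (by rw [ha, h, Prod.mk_zero_zero])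
  have hp2 : p ≠ 2 := by
    rintro rfl
    exact Nat.not_odd_iff_even.2 even_two hodd
  refine Finset.card_eq_two.2
    ⟨_, _, Platonic.wheelVertex_one_ne_neg_one hx (inv_ne_zero hI) hp2, ?_⟩
  ext w
  simpa only [Finset.mem_filter, Finset.mem_univ, true_and, Finset.mem_insert,
    Finset.mem_singleton] using Platonic.adj_and_adj_axis_iff hx hI a ha w

/-- Every vertex `v = [λ,μ]` of `Π_p` with `μ ≠ 0` has exactly two common neighbours
with each principal-axis vertex `[i,0]` (`1 ≤ i ≤ (p-1)/2`): every vertex not on the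
principal axis has exactly two neighbours on the boundary of each wheel. -/
theorem platonic_two_neighbours_per_wheel (p : ℕ) (hp : p.Prime) (hodd : Odd p)
    [NeZero p] (v a : PlatonicVertex p) (hv : secondNZ p v)
    (i : ℕ) (hi1 : 1 ≤ i) (hi2 : i ≤ (p - 1) / 2)
    (ha : ∃ x : PlatonicPair p, ⟦x⟧ = a ∧ x.val = ((i : ZMod p), 0)) :
    (Finset.univ.filter
      (fun w : PlatonicVertex p =>
        (Platonic p).Adj w v ∧ (Platonic p).Adj w a)).card = 2 :=
  platonic_two_neighbours_per_wheel_general p hp hodd v a hv i ha
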